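/- arXiv:1905.12816 — 3 statements merged into one kernel-verified Lean document; each statement's English description precedes it below -/
import Mathlib

section
/- Let $I=(a,b)$ with $k = b-a > 0$, and let $\phi = (\phi_1,\dots,\phi_d) : (a,b) \to \mathbb{R}^d$ be a vector of polynomials each of degree at most $r$. Then $\int_a^b |\phi(t)|^2\,dt \le \frac{1}{k} \sum_{i=1}^d \left( \int_a^b \phi_i(t)\,dt \right)^2 + \frac{1}{2} \int_a^b (b-t)(t-a) |\phi'(t)|^2\,dt$. -/
open Polynomial intervalIntegral

noncomputable def J (a b : ℝ) (p : ℝ[X]) : ℝ := ∫ t in a..b, p.eval t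

lemma J_add (a b : ℝ) (p q : ℝ[X]) : J a b (p + q) = J a b p + J a b q := by
  simp only [J, eval_add]
  exact integral_add (p.continuous_aeval.intervalIntegrable _ _)
    (q.continuous_aeval.intervalIntegrable _ _)

lemma J_sub (a b : ℝ) (p q : ℝ[X]) : J a b (p - q) = J a b p - J a b q := by
  simp only [J, eval_sub]
  exact integral_sub (p.continuous_aeval.intervalIntegrable _ _)
    (q.continuous_aeval.intervalIntegrable _ _)

lemma J_smul (a b c : ℝ) (p : ℝ[X]) : J a b (C c * p) = c * J a b p := by
  simp only [J, eval_mul, eval_C]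
  rw [← integral_const_mul]

lemma J_const (a b c : ℝ) : J a b (C c) = (b - a) * c := by
  simp [J, mul_comm]

lemma J_nonneg (a b : ℝ) (hab : a ≤ b) (p : ℝ[X])
    (h : ∀ t ∈ Set.Icc a b, 0 ≤ p.eval t) : 0 ≤ J a b p :=
  integral_nonneg hab h

lemma J_deriv (a b : ℝ) (p : ℝ[X]) : J a b p.derivative = p.eval b - p.eval a :=
  integral_eq_sub_of_hasDerivAt (fun x _ => p.hasDerivAt x)
    (p.derivative.continuous_aeval.intervalIntegrable _ _)

lemma exists_antideriv (p : ℝ[X]) : ∃ P : ℝ[X], P.derivative = p := by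
  induction p using Polynomial.induction_on' with
  | add p q hp hq =>
    obtain ⟨P, hP⟩ := hp; obtain ⟨Q, hQ⟩ := hq
    exact ⟨P + Q, by simp [hP, hQ]⟩
  | monomial n c =>
    refine ⟨Polynomial.monomial (n + 1) (c / ((n : ℝ) + 1)), ?_⟩
    rw [Polynomial.derivative_monomial]
    push_cast
    rw [div_mul_cancel₀ _ (by positivity : ((n : ℝ) + 1) ≠ 0)]

/-- The scalar Poincaré-type inequality. -/
lemma scalar_poincare (a b : ℝ) (hab : a < b) (ψ : ℝ[X]) :
    (∫ t in a..b, (ψ.eval t) ^ 2) ≤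
      (1 / (b - a)) * (∫ t in a..b, ψ.eval t) ^ 2 +
        (1 / 2) * ∫ t in a..b, (b - t) * (t - a) * (ψ.derivative.eval t) ^ 2 := by
  have hk : (0:ℝ) < b - a := sub_pos.mpr hab
  set k := b - a with hkdef
  set c : ℝ := J a b ψ / k with hc
  set h : ℝ[X] := ψ - C c with hh
  set W : ℝ[X] := (C b - X) * (X - C a) with hW
  obtain ⟨H₀, hH₀⟩ := exists_antideriv h
  set H : ℝ[X] := H₀ - C (H₀.eval a) with hHdef
  have hHd : H.derivative = h := by simp [hHdef, hH₀]
  have hHa : H.eval a = 0 := by simp [hHdef]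
  have hJh : J a b h = 0 := by
    have h1 : h = ψ + C (-c) := by rw [hh, map_neg]; ring
    rw [h1, J_add, J_const, ← hkdef]
    have : k * (J a b ψ / k) = J a b ψ := by field_simp
    rw [hc]
    linarith [this]
  have hHb : H.eval b = 0 := by
    have h2 := J_deriv a b H
    rw [hHd, hJh, hHa, sub_zero] at h2
    exact h2.symm
  have hdvd : (X - C a) * (X - C b) ∣ H := by
    have h1 : (X - C a) ∣ H := (Polynomial.dvd_iff_isRoot).mpr hHa
    have h2 : (X - C b) ∣ H := (Polynomial.dvd_iff_isRoot).mpr hHb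
    exact (Polynomial.isCoprime_X_sub_C_of_isUnit_sub
      (by simpa using (sub_ne_zero_of_ne hab.ne).isUnit)).mul_dvd h1 h2
  obtain ⟨q, hq⟩ := hdvd
  set g : ℝ[X] := -q with hg
  have hHW : H = W * g := by rw [hq, hW, hg]; ring
  set hd : ℝ[X] := h.derivative with hhd
  set A : ℝ := J a b (W * g * g) with hA
  set B : ℝ := J a b (W * g * hd) with hB
  set Cq : ℝ := J a b (W * hd * hd) with hCq
  set S : ℝ := J a b (h * h) with hS
  have Wnn : ∀ t ∈ Set.Icc a b, 0 ≤ W.eval t := by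
    intro t ht
    simp only [hW, eval_mul, eval_sub, eval_C, eval_X]
    exact mul_nonneg (by linarith [ht.2]) (by linarith [ht.1])
  have hWa : W.eval a = 0 := by rw [hW]; simp
  have hWb : W.eval b = 0 := by rw [hW]; simp
  have hWd : W.derivative = C a + C b - C 2 * X := by
    rw [hW]
    simp only [Polynomial.derivative_mul, Polynomial.derivative_sub,
      Polynomial.derivative_C, Polynomial.derivative_X]
    rw [map_ofNat C 2]
    ring
  have hwd2 : Polynomial.derivative (C a + C b - C 2 * X : ℝ[X]) = -(C 2) := by
    simp
  have hhexp : h = W.derivative * g + W * g.derivative := by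
    rw [← hHd, hHW, Polynomial.derivative_mul]
  -- Step A: S = -B
  have stepA : S = -B := by
    have ibp : (H * h).derivative = h * h + H * hd := by
      rw [Polynomial.derivative_mul, hHd, hhd]
    have h2 := J_deriv a b (H * h)
    rw [ibp, J_add] at h2
    simp only [eval_mul, hHa, hHb, zero_mul, sub_zero] at h2
    have hHh : J a b (H * hd) = B := by rw [hHW]
    rw [hHh] at h2
    rw [hS, hB] at *
    linarith [h2]
  -- Step C (Hardy): 2A ≤ S
  have stepC : 2 * A ≤ S := by
    have key : h * h = (W * W.derivative * (g * g)).derivative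
        + C 2 * (W * g * g) + (W * g.derivative) * (W * g.derivative) := by
      rw [hhexp]
      simp only [Polynomial.derivative_mul, hWd, hwd2]
      rw [show (C (2:ℝ)) = (2 : ℝ[X]) from map_ofNat C 2]
      ring
    have hJ := congrArg (J a b) key
    rw [J_add, J_add, J_deriv, J_smul] at hJ
    have hbd : (W * W.derivative * (g * g)).eval b
        - (W * W.derivative * (g * g)).eval a = 0 := by
      simp [hWa, hWb]
    rw [hbd] at hJ
    have hsq : 0 ≤ J a b (W * g.derivative * (W * g.derivative)) := by
      apply J_nonneg a b hab.le
      intro t ht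
      simp only [eval_mul]
      exact mul_self_nonneg _
    rw [hS, hA]
    nlinarith [hJ, hsq]
  -- Cauchy–Schwarz: B² ≤ A·Cq
  have CS : B ^ 2 ≤ A * Cq := by
    have quad : ∀ l : ℝ, 0 ≤ A * (l * l) + (2 * B) * l + Cq := by
      intro l
      have expand : W * (C l * g + hd) * (C l * g + hd) =
          C l * (C l * (W * g * g)) + C l * (W * g * hd) + C l * (W * g * hd)
            + W * hd * hd := by ring
      have hJ := congrArg (J a b) expand
      simp only [J_add, J_smul] at hJ
      have pos : 0 ≤ J a b (W * (C l * g + hd) * (C l * g + hd)) := by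
        apply J_nonneg a b hab.le
        intro t ht
        have := Wnn t ht
        simp only [eval_mul, eval_add, eval_C]
        rw [mul_assoc]
        exact mul_nonneg this (mul_self_nonneg _)
      rw [hJ, ← hA, ← hB, ← hCq] at pos
      ring_nf at pos ⊢
      linarith [pos]
    have hdis := discrim_le_zero quad
    rw [discrim] at hdis
    nlinarith [hdis]
  have Snn : 0 ≤ S := by
    apply J_nonneg a b hab.le
    intro t ht
    simp only [eval_mul]
    exact mul_self_nonneg _
  have Ann : 0 ≤ A := by
    apply J_nonneg a b hab.le
    intro t ht
    simp only [eval_mul]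
    rw [mul_assoc]
    exact mul_nonneg (Wnn t ht) (mul_self_nonneg _)
  have Cnn : 0 ≤ Cq := by
    apply J_nonneg a b hab.le
    intro t ht
    simp only [eval_mul]
    rw [mul_assoc]
    exact mul_nonneg (Wnn t ht) (mul_self_nonneg _)
  have final : S ≤ Cq / 2 := by
    rcases eq_or_lt_of_le Snn with hS0 | hS0
    · linarith
    · nlinarith [CS, stepA, stepC]
  -- translate back
  have hJψ2 : (∫ t in a..b, (ψ.eval t) ^ 2) = J a b (ψ * ψ) := by
    simp [J, eval_mul, sq]
  have hJψ : (∫ t in a..b, ψ.eval t) = J a b ψ := rfl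
  have hRHS : (∫ t in a..b, (b - t) * (t - a) * (ψ.derivative.eval t) ^ 2) = Cq := by
    rw [hCq]
    have hdd : hd = ψ.derivative := by rw [hhd, hh]; simp
    rw [hdd, J]
    congr 1
    funext t
    simp only [hW, eval_mul, eval_sub, eval_C, eval_X, sq]
    ring
  have hck : c * k = J a b ψ := by rw [hc]; field_simp
  have hSdecomp : J a b (ψ * ψ) = S + (J a b ψ) ^ 2 / k := by
    have expand : ψ * ψ = h * h + C c * ψ + C c * ψ - C c * C c := by
      rw [hh]; ring
    have hJ := congrArg (J a b) expand
    rw [J_sub, J_add, J_add, J_smul, J_smul, J_const] at hJ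
    rw [hJ, ← hS, ← hkdef, ← hck]
    field_simp
    ring
  rw [hJψ2, hJψ, hRHS, hSdecomp]
  rw [div_eq_mul_inv, one_div]
  linarith [final]

/-- Poincaré-type inequality for vector-valued polynomials on an interval
(Lemma C.1 in the paper, from Schötzau–Schwab). -/
theorem poly_poincare_type (a b : ℝ) (hab : a < b) (d r : ℕ)
    (φ : Fin d → Polynomial ℝ) (hdeg : ∀ i, (φ i).degree ≤ (r : ℕ)) :
    (∫ t in a..b, ∑ i, ((φ i).eval t) ^ 2) ≤
      (1 / (b - a)) * ∑ i, (∫ t in a..b, (φ i).eval t) ^ 2 +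
        (1 / 2) * ∫ t in a..b, (b - t) * (t - a) * ∑ i, ((φ i).derivative.eval t) ^ 2 := by
  have hL : (∫ t in a..b, ∑ i, ((φ i).eval t) ^ 2)
      = ∑ i, ∫ t in a..b, ((φ i).eval t) ^ 2 := by
    apply integral_finset_sum
    intro i _
    exact (((φ i).continuous_aeval).pow 2).intervalIntegrable _ _
  have hR : (∫ t in a..b, (b - t) * (t - a) * ∑ i, ((φ i).derivative.eval t) ^ 2)
      = ∑ i, ∫ t in a..b, (b - t) * (t - a) * ((φ i).derivative.eval t) ^ 2 := by
    rw [← integral_finset_sum]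
    · congr 1; funext t; rw [Finset.mul_sum]
    · intro i _
      exact (((continuous_const.sub continuous_id).mul
        (continuous_id.sub continuous_const)).mul
        (((φ i).derivative.continuous_aeval).pow 2)).intervalIntegrable _ _
  rw [hL, hR, Finset.mul_sum, Finset.mul_sum, ← Finset.sum_add_distrib]
  apply Finset.sum_le_sum
  intro i _
  exact scalar_poincare a b hab (φ i)
end

section
/- Let $0 = t_0 < t_1 < \cdots < t_N = T$ be a partition of $[0,T]$, and define the reversed partition by $s_j = T - t_{N-j}$. Suppose $\lambda$ is a piecewise polynomial of degree $\le r$ on this partition satisfying $B(\phi,\lambda) = \int_0^T \phi(t) \cdot F(t,\lambda(t))\,dt$ for all piecewise polynomial test functions $\phi$ of degree $\le r$, where $B(\phi,\lambda) = \sum_{n=1}^N \int_{t_{n-1}}^{t_n} \phi'(t)\cdot\lambda(t)\,dt + \sum_{n=2}^N [\phi]_{n-1}\cdot\lambda^+_{n-1} + \phi^+_0 \cdot \lambda^+_0$. Then the time-reversed function $W(t) = \lambda(T - t)$ satisfies $B_J(W,\psi) = \int_0^T F(t, W(t)) \cdot \psi(t)\,dt$ for all test functions $\psi$ of degree $\le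 r$ on the reversed partition, where $B_J(W,\psi) = \sum_{n=1}^N \int_{s_{n-1}}^{s_n} W'(t)\cdot\psi(t)\,dt + \sum_{n=2}^N [W]_{n-1}\cdot\psi^+_{n-1} + W^+_0 \cdot \psi^+_0$. -/
open scoped BigOperators

open Polynomial

lemma eval_reflect (p : ℝ[X]) (T t : ℝ) :
    (p.comp (C T - X)).eval t = p.eval (T - t) := by
  simp [eval_comp]

lemma derivative_reflect (p : ℝ[X]) (T t : ℝ) :
    (p.comp (C T - X)).derivative.eval t = -(p.derivative.eval (T - t)) := by
  rw [derivative_comp]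
  simp [eval_comp]

lemma degree_comp_reflect (p : ℝ[X]) (T : ℝ) (r : ℕ) (h : p.degree ≤ (r : ℕ)) :
    (p.comp (C T - X)).degree ≤ (r : ℕ) := by
  rw [← Polynomial.natDegree_le_iff_degree_le] at h ⊢
  calc (p.comp (C T - X)).natDegree ≤ p.natDegree * (C T - X : ℝ[X]).natDegree :=
        Polynomial.natDegree_comp_le
    _ ≤ r := by
        have : ((C T - X : ℝ[X])).natDegree = 1 := by
          rw [show (C T - X : ℝ[X]) = -(X - C T) by ring, natDegree_neg, natDegree_X_sub_C]
        rw [this, mul_one]; exact h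

lemma ibp_sum (d : ℕ) (p q : Fin d → ℝ[X]) (a b : ℝ) :
    (∫ t in a..b, ∑ i, (p i).derivative.eval t * (q i).eval t)
      = (∑ i, (p i).eval b * (q i).eval b) - (∑ i, (p i).eval a * (q i).eval a)
        - ∫ t in a..b, ∑ i, (p i).eval t * (q i).derivative.eval t := by
  have key : ∫ t in a..b, (∑ i, (p i) * (q i) : ℝ[X]).derivative.eval t
      = (∑ i, (p i) * (q i) : ℝ[X]).eval b - (∑ i, (p i) * (q i) : ℝ[X]).eval a := by
    apply intervalIntegral.integral_eq_sub_of_hasDerivAt (fun t _ => Polynomial.hasDerivAt _ t)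
    exact (Polynomial.continuous_aeval _).intervalIntegrable _ _
  have hint : ∀ (u : Fin d → ℝ[X]) (v : Fin d → ℝ[X]), IntervalIntegrable
      (fun t => ∑ i, (u i).eval t * (v i).eval t) MeasureTheory.volume a b := by
    intro u v
    apply Continuous.intervalIntegrable
    exact continuous_finset_sum _ fun i _ => ((u i).continuous_aeval).mul ((v i).continuous_aeval)
  have expand : (fun t => (∑ i, (p i) * (q i) : ℝ[X]).derivative.eval t)
      = fun t => (∑ i, (p i).derivative.eval t * (q i).eval t)
        + ∑ i, (p i).eval t * (q i).derivative.eval t := by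
    funext t
    simp [derivative_sum, derivative_mul, eval_finset_sum, Finset.sum_add_distrib, add_comm]
  rw [expand, intervalIntegral.integral_add (hint _ _) (hint _ _)] at key
  have hb : (∑ i, (p i) * (q i) : ℝ[X]).eval b = ∑ i, (p i).eval b * (q i).eval b := by
    simp [eval_finset_sum]
  have ha : (∑ i, (p i) * (q i) : ℝ[X]).eval a = ∑ i, (p i).eval a * (q i).eval a := by
    simp [eval_finset_sum]
  rw [hb, ha] at key
  linarith

lemma dg_algebra (N : ℕ) (hN : 1 ≤ N) (A B C : ℕ → ℝ) :
    (∑ n ∈ Finset.Icc 1 N, (A n - B n)) + (∑ n ∈ Finset.Icc 2 N, (B n - C (n-1))) + B 1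
      = A N - ∑ n ∈ Finset.Icc 1 (N-1), (C n - A n) := by
  induction N with
  | zero => omega
  | succ m ih =>
    rcases Nat.eq_or_lt_of_le hN with h1 | h1
    · simp [← h1]
    · have hm : 1 ≤ m := by omega
      have e1 : ∑ n ∈ Finset.Icc 1 (m+1), (A n - B n)
          = (∑ n ∈ Finset.Icc 1 m, (A n - B n)) + (A (m+1) - B (m+1)) :=
        Finset.sum_Icc_succ_top (by omega) _
      have e2 : ∑ n ∈ Finset.Icc 2 (m+1), (B n - C (n-1))
          = (∑ n ∈ Finset.Icc 2 m, (B n - C (n-1))) + (B (m+1) - C m) := by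
        rw [Finset.sum_Icc_succ_top (by omega)]
        simp
      have e3 : ∑ n ∈ Finset.Icc 1 (m+1-1), (C n - A n)
          = (∑ n ∈ Finset.Icc 1 (m-1), (C n - A n)) + (C m - A m) := by
        have h : m + 1 - 1 = (m - 1) + 1 := by omega
        have h2 : m - 1 + 1 = m := by omega
        rw [h, Finset.sum_Icc_succ_top (by omega), h2]
      rw [e1, e2, e3]
      have := ih hm
      linarith

lemma sum_rev (N : ℕ) (f : ℕ → ℝ) :
    ∑ n ∈ Finset.Icc 1 N, f (N + 1 - n) = ∑ n ∈ Finset.Icc 1 N, f n := by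
  apply Finset.sum_nbij' (i := fun n => N + 1 - n) (j := fun n => N + 1 - n) <;>
    (intros ; simp_all [Finset.mem_Icc] <;> omega)

lemma sum_rev2 (N : ℕ) (f : ℕ → ℝ) :
    ∑ m ∈ Finset.Icc 2 N, f (N + 1 - m) = ∑ n ∈ Finset.Icc 1 (N - 1), f n := by
  apply Finset.sum_nbij' (i := fun n => N + 1 - n) (j := fun n => N + 1 - n) <;>
    (intros ; simp_all [Finset.mem_Icc] <;> omega)

lemma cov (T : ℝ) (g : ℝ → ℝ) (a b : ℝ) :
    (∫ t in (T - b)..(T - a), g (T - t)) = ∫ u in a..b, g u := by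
  rw [intervalIntegral.integral_comp_sub_left g T, sub_sub_cancel, sub_sub_cancel]

/-- The DG bilinear form `B(x, φ)` on a partition `tt 0 < tt 1 < ⋯ < tt N`,
for piecewise (vector-valued) polynomials represented by their pieces:
`x n` is the polynomial describing `x` on the interval `(tt (n-1), tt n)`. -/
noncomputable def DGform (d N : ℕ) (tt : ℕ → ℝ) (x φ : ℕ → Fin d → Polynomial ℝ) : ℝ :=
  (∑ n ∈ Finset.Icc 1 N, ∫ t in tt (n - 1)..tt n,
      ∑ i, ((x n i).derivative.eval t) * (φ n i).eval t)
  + (∑ n ∈ Finset.Icc 2 N, ∑ i,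
      ((x n i).eval (tt (n - 1)) - (x (n - 1) i).eval (tt (n - 1))) * (φ n i).eval (tt (n - 1)))
  + ∑ i, (x 1 i).eval (tt 0) * (φ 1 i).eval (tt 0)

/-- Time reversal of the DG scheme (Lemma 3.6): if `λ` satisfies
`B(φ, λ) = (φ, F(t, λ))_I` for all test functions `φ` of degree `≤ r`, then the
time-reversed function `W(t) = λ(T - t)` satisfies the forward DG equation
`B_J(W, ψ) = (F(t, W), ψ)_I` (with `F` evaluated compatibly with `t ↦ T - t`)
on the reversed partition `s_j = T - t_{N-j}`. -/
theorem DG_time_reversal (d N r : ℕ) (T : ℝ) (tt : ℕ → ℝ)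
    (hN : 1 ≤ N) (htt0 : tt 0 = 0) (httN : tt N = T)
    (hmono : ∀ n < N, tt n < tt (n + 1))
    (F : ℝ → (Fin d → ℝ) → (Fin d → ℝ))
    (lam : ℕ → Fin d → Polynomial ℝ)
    (hlamdeg : ∀ n i, (lam n i).degree ≤ (r : ℕ))
    (hlam : ∀ φ : ℕ → Fin d → Polynomial ℝ, (∀ n i, (φ n i).degree ≤ (r : ℕ)) →
      DGform d N tt φ lam =
        ∑ n ∈ Finset.Icc 1 N, ∫ t in tt (n - 1)..tt n,
          ∑ i, (φ n i).eval t * F t (fun j => (lam n j).eval t) i) :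
    ∀ ψ : ℕ → Fin d → Polynomial ℝ, (∀ n i, (ψ n i).degree ≤ (r : ℕ)) →
      DGform d N (fun j => T - tt (N - j))
          (fun n i => (lam (N + 1 - n) i).comp (Polynomial.C T - Polynomial.X)) ψ =
        ∑ n ∈ Finset.Icc 1 N,
          ∫ t in (T - tt (N - (n - 1)))..(T - tt (N - n)),
            ∑ i, F (T - t)
                (fun j => ((lam (N + 1 - n) j).comp (Polynomial.C T - Polynomial.X)).eval t) i *
              (ψ n i).eval t := by
  intro ψ hψ
  classical
  set φ : ℕ → Fin d → Polynomial ℝ :=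
    fun n i => (ψ (N + 1 - n) i).comp (Polynomial.C T - Polynomial.X) with hφdef
  have hφdeg : ∀ n i, (φ n i).degree ≤ (r : ℕ) := fun n i =>
    degree_comp_reflect _ _ _ (hψ _ i)
  set A : ℕ → ℝ := fun n => ∑ i, (φ n i).eval (tt n) * (lam n i).eval (tt n) with hA
  set B : ℕ → ℝ := fun n => ∑ i, (φ n i).eval (tt (n-1)) * (lam n i).eval (tt (n-1)) with hB
  set Cc : ℕ → ℝ := fun n => ∑ i, (φ n i).eval (tt n) * (lam (n+1) i).eval (tt n) with hC
  set J : ℕ → ℝ :=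
    fun n => ∫ t in tt (n-1)..tt n, ∑ i, (φ n i).eval t * (lam n i).derivative.eval t with hJ
  -- Step 1: integration by parts on the original form
  have step1 : DGform d N tt φ lam
      = A N - (∑ n ∈ Finset.Icc 1 (N-1), (Cc n - A n)) - ∑ n ∈ Finset.Icc 1 N, J n := by
    have h1 : (∑ n ∈ Finset.Icc 1 N, ∫ t in tt (n-1)..tt n,
        ∑ i, ((φ n i).derivative.eval t) * (lam n i).eval t)
        = (∑ n ∈ Finset.Icc 1 N, (A n - B n)) - ∑ n ∈ Finset.Icc 1 N, J n := by
      rw [← Finset.sum_sub_distrib]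
      refine Finset.sum_congr rfl fun n _ => ?_
      rw [ibp_sum]
    have h2 : (∑ n ∈ Finset.Icc 2 N, ∑ i,
        ((φ n i).eval (tt (n-1)) - (φ (n-1) i).eval (tt (n-1))) * (lam n i).eval (tt (n-1)))
        = ∑ n ∈ Finset.Icc 2 N, (B n - Cc (n-1)) := by
      refine Finset.sum_congr rfl fun n hn => ?_
      have hn2 : 2 ≤ n := (Finset.mem_Icc.mp hn).1
      have e : n - 1 + 1 = n := by omega
      simp only [hB, hC, e]
      rw [← Finset.sum_sub_distrib]
      exact Finset.sum_congr rfl fun i _ => by ring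
    have h3 : (∑ i, (φ 1 i).eval (tt 0) * (lam 1 i).eval (tt 0)) = B 1 := by
      simp only [hB]
    unfold DGform
    rw [h1, h2, h3]
    have := dg_algebra N hN A B Cc
    linarith
  -- Step 2: the reversed form equals the same expression
  have step2 : DGform d N (fun j => T - tt (N - j))
      (fun n i => (lam (N + 1 - n) i).comp (Polynomial.C T - Polynomial.X)) ψ
      = A N - (∑ n ∈ Finset.Icc 1 (N-1), (Cc n - A n)) - ∑ n ∈ Finset.Icc 1 N, J n := by
    have p1 : (∑ m ∈ Finset.Icc 1 N, ∫ t in (T - tt (N-(m-1)))..(T - tt (N-m)),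
        ∑ i, (((lam (N+1-m) i).comp (Polynomial.C T - Polynomial.X)).derivative.eval t)
          * (ψ m i).eval t)
        = -∑ n ∈ Finset.Icc 1 N, J n := by
      rw [← sum_rev N J, ← Finset.sum_neg_distrib]
      refine Finset.sum_congr rfl fun m hm => ?_
      obtain ⟨hm1, hm2⟩ := Finset.mem_Icc.mp hm
      have e2 : N - (m - 1) = N + 1 - m := by omega
      have e1 : N - m = N + 1 - m - 1 := by omega
      rw [e2, e1]
      have ec : N + 1 - (N + 1 - m) = m := by omega
      calc (∫ t in (T - tt (N+1-m))..(T - tt (N+1-m-1)),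
            ∑ i, (((lam (N+1-m) i).comp (Polynomial.C T - Polynomial.X)).derivative.eval t)
              * (ψ m i).eval t)
          = ∫ t in (T - tt (N+1-m))..(T - tt (N+1-m-1)),
              -((fun u => ∑ i, (φ (N+1-m) i).eval u * (lam (N+1-m) i).derivative.eval u)
                (T - t)) := by
            apply intervalIntegral.integral_congr
            intro t _
            simp only [hφdef, eval_reflect, derivative_reflect, ec, sub_sub_cancel]
            rw [← Finset.sum_neg_distrib]
            exact Finset.sum_congr rfl fun i _ => by ring
        _ = -(∫ t in (T - tt (N+1-m))..(T - tt (N+1-m-1)),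
              (fun u => ∑ i, (φ (N+1-m) i).eval u * (lam (N+1-m) i).derivative.eval u)
                (T - t)) := intervalIntegral.integral_neg
        _ = -(∫ u in tt (N+1-m-1)..tt (N+1-m),
              ∑ i, (φ (N+1-m) i).eval u * (lam (N+1-m) i).derivative.eval u) :=
            congrArg Neg.neg (cov T
              (fun u => ∑ i, (φ (N+1-m) i).eval u * (lam (N+1-m) i).derivative.eval u)
              (tt (N+1-m-1)) (tt (N+1-m)))
        _ = -(J (N+1-m)) := by simp only [hJ]
    have p2 : (∑ m ∈ Finset.Icc 2 N, ∑ i,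
        (((lam (N+1-m) i).comp (Polynomial.C T - Polynomial.X)).eval (T - tt (N-(m-1)))
          - ((lam (N+1-(m-1)) i).comp (Polynomial.C T - Polynomial.X)).eval (T - tt (N-(m-1))))
          * (ψ m i).eval (T - tt (N-(m-1))))
        = ∑ n ∈ Finset.Icc 1 (N-1), (A n - Cc n) := by
      rw [← sum_rev2 N (fun n => A n - Cc n)]
      refine Finset.sum_congr rfl fun m hm => ?_
      obtain ⟨hm1, hm2⟩ := Finset.mem_Icc.mp hm
      have ea : N - (m - 1) = N + 1 - m := by omega
      have eb : N + 1 - (m - 1) = N + 1 - m + 1 := by omega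
      have ec : N + 1 - (N + 1 - m) = m := by omega
      simp only [hA, hC, hφdef, eval_reflect, ea, eb, ec, sub_sub_cancel]
      rw [← Finset.sum_sub_distrib]
      exact Finset.sum_congr rfl fun i _ => by ring
    have p3 : (∑ i, ((lam (N+1-1) i).comp (Polynomial.C T - Polynomial.X)).eval (T - tt (N-0))
          * (ψ 1 i).eval (T - tt (N-0)))
        = A N := by
      have ec : N + 1 - N = 1 := by omega
      simp only [hA, hφdef, eval_reflect, ec, Nat.sub_zero, Nat.add_sub_cancel, sub_sub_cancel]
      exact Finset.sum_congr rfl fun i _ => mul_comm _ _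
    have hsumneg : (∑ n ∈ Finset.Icc 1 (N-1), (A n - Cc n))
        = -∑ n ∈ Finset.Icc 1 (N-1), (Cc n - A n) := by
      rw [← Finset.sum_neg_distrib]
      exact Finset.sum_congr rfl fun n _ => by ring
    simp only [DGform]
    rw [p1, p2, p3, hsumneg]
    ring
  -- Step 3: change of variables on the right-hand side
  have step3 : (∑ n ∈ Finset.Icc 1 N, ∫ t in tt (n-1)..tt n,
        ∑ i, (φ n i).eval t * F t (fun j => (lam n j).eval t) i)
      = ∑ n ∈ Finset.Icc 1 N,
          ∫ t in (T - tt (N - (n - 1)))..(T - tt (N - n)),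
            ∑ i, F (T - t)
                (fun j => ((lam (N + 1 - n) j).comp (Polynomial.C T - Polynomial.X)).eval t) i *
              (ψ n i).eval t := by
    rw [← sum_rev N (fun m => ∫ t in tt (m-1)..tt m,
        ∑ i, (φ m i).eval t * F t (fun j => (lam m j).eval t) i)]
    refine Finset.sum_congr rfl fun n hn => ?_
    obtain ⟨hn1, hn2⟩ := Finset.mem_Icc.mp hn
    have ea : N - (n - 1) = N + 1 - n := by omega
    have eb : N - n = N + 1 - n - 1 := by omega
    have ec : N + 1 - (N + 1 - n) = n := by omega
    symm
    rw [ea, eb]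
    calc (∫ t in (T - tt (N+1-n))..(T - tt (N+1-n-1)),
          ∑ i, F (T - t)
              (fun j => ((lam (N + 1 - n) j).comp (Polynomial.C T - Polynomial.X)).eval t) i *
            (ψ n i).eval t)
        = ∫ t in (T - tt (N+1-n))..(T - tt (N+1-n-1)),
            (fun u => ∑ i, (φ (N+1-n) i).eval u
              * F u (fun j => (lam (N+1-n) j).eval u) i) (T - t) := by
          apply intervalIntegral.integral_congr
          intro t _
          simp only [hφdef, eval_reflect, ec, sub_sub_cancel]
          exact Finset.sum_congr rfl fun i _ => mul_comm _ _
      _ = ∫ u in tt (N+1-n-1)..tt (N+1-n),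
            ∑ i, (φ (N+1-n) i).eval u * F u (fun j => (lam (N+1-n) j).eval u) i :=
          cov T (fun u => ∑ i, (φ (N+1-n) i).eval u
            * F u (fun j => (lam (N+1-n) j).eval u) i) (tt (N+1-n-1)) (tt (N+1-n))
  have final := step1.symm.trans ((hlam φ hφdeg).trans step3)
  exact step2.trans final
end

section
/- Let $f : [0,T] \times \mathbb{R}^d \times \mathbb{R}^m \to \mathbb{R}^d$ be continuously differentiable in $(x,u)$ with globally bounded derivatives, let $u, v$ be bounded measurable controls, and for $s \in \mathbb{R}$ let $x^s$ solve $(x^s)'(t) = f(t, x^s(t), u(t) + s v(t))$, $x^s(0) = x_0$. Let $y$ solve the linearized equation $y'(t) = \partial_x f(t, x^0(t), u(t)) y(t) + \partial_u f(t, x^0(t), u(t)) v(t)$, $y(0) = 0$. Then for each $t \in [0,T]$, $\lim_{s \to 0} \frac{x^s(t) - x^0(t)}{s} = y(t)$, i.e., the control-to-state map is directionally differentiable with derivative $y$. -/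
/-!
The remainder `r s t = X s t - X 0 t - s • y t` satisfies a linear differential inequality
`‖r'‖ ≤ M ‖r‖ + L ‖(X s - X 0, s v)‖²`: its derivative is the first-order Taylor remainder of `f`
plus `D (r, 0)`. A first Grönwall argument gives `‖X s - X 0‖ = O(|s|)`, so the forcing term is
`O(s²)`, and a second one gives `‖r s t‖ = O(s²)`, i.e. `s ↦ X s t` is differentiable at `0`
with derivative `y t`.
-/

open Topology Filter Set

lemma gronwallBound_zero_left_eq_mul (K ε x : ℝ) :
    gronwallBound 0 K ε x = ε * gronwallBound 0 K 1 x := by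
  unfold gronwallBound
  split_ifs <;> ring

lemma norm_le_mul_gronwallBound_of_hasDerivAt {E : Type*} [NormedAddCommGroup E]
    [NormedSpace ℝ E] {φ φ' : ℝ → E} {K ε T : ℝ}
    (hK : 0 ≤ K) (hε : 0 ≤ ε) (hφ : ∀ t ∈ Icc 0 T, HasDerivAt φ (φ' t) t) (hφ0 : φ 0 = 0)
    (bound : ∀ t ∈ Icc 0 T, ‖φ' t‖ ≤ K * ‖φ t‖ + ε) :
    ∀ t ∈ Icc 0 T, ‖φ t‖ ≤ ε * gronwallBound 0 K 1 T := by
  intro t ht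
  have hcont : ContinuousOn φ (Icc 0 T) := fun r hr => (hφ r hr).continuousAt.continuousWithinAt
  calc ‖φ t‖ ≤ gronwallBound 0 K ε (t - 0) :=
        norm_le_gronwallBound_of_norm_deriv_right_le hcont
          (fun r hr => (hφ r (Ico_subset_Icc_self hr)).hasDerivWithinAt)
          (by simp [hφ0]) (fun r hr => bound r (Ico_subset_Icc_self hr)) t ht
    _ ≤ gronwallBound 0 K ε T := gronwallBound_mono le_rfl hε hK (by linarith [ht.1, ht.2])
    _ = ε * gronwallBound 0 K 1 T := gronwallBound_zero_left_eq_mul K ε T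

lemma hasDerivAt_of_norm_sub_sub_smul_le_sq {E : Type*} [NormedAddCommGroup E]
    [NormedSpace ℝ E] {g : ℝ → E} {g' : E} {C : ℝ}
    (h : ∀ s, ‖g s - g 0 - s • g'‖ ≤ C * s ^ 2) : HasDerivAt g g' 0 := by
  rw [hasDerivAt_iff_isLittleO]
  simp only [sub_zero]
  refine (Asymptotics.IsBigO.of_bound C (Eventually.of_forall fun s => ?_)).trans_isLittleO
    (Asymptotics.isLittleO_pow_id one_lt_two)
  simpa using h s

lemma norm_image_sub_sub_le_of_lipschitz_fderiv {E F : Type*}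
    [NormedAddCommGroup E] [NormedSpace ℝ E] [NormedAddCommGroup F] [NormedSpace ℝ F]
    {g : E → F} {g' : E → E →L[ℝ] F} {L : ℝ} (hg : ∀ p, HasFDerivAt g (g' p) p) (hL : 0 ≤ L)
    (hg' : ∀ p q, ‖g' p - g' q‖ ≤ L * ‖p - q‖) (p q : E) :
    ‖g q - g p - g' p (q - p)‖ ≤ L * ‖q - p‖ ^ 2 := by
  have bound : ∀ x ∈ segment ℝ p q, ‖g' x - g' p‖ ≤ L * ‖q - p‖ := fun x hx =>
    (hg' x p).trans (mul_le_mul_of_nonneg_left (norm_sub_le_of_mem_segment hx) hL)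
  calc ‖g q - g p - g' p (q - p)‖ ≤ L * ‖q - p‖ * ‖q - p‖ :=
        (convex_segment p q).norm_image_sub_le_of_norm_hasFDerivWithin_le'
          (fun x _ => (hg x).hasFDerivWithinAt) bound
          (left_mem_segment ℝ p q) (right_mem_segment ℝ p q)
    _ = L * ‖q - p‖ ^ 2 := by ring

section ControlToState

variable {E U : Type*} [NormedAddCommGroup E] [NormedSpace ℝ E]
  [NormedAddCommGroup U] [NormedSpace ℝ U]
  {F : ℝ → E × U → E} {D : ℝ → E × U → E × U →L[ℝ] E} {M Mv L T : ℝ}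
  {u v : ℝ → U} {x₀ : E} {X : ℝ → ℝ → E} {y : ℝ → E}

lemma exists_norm_sub_le_mul_abs_of_perturbed_control
    (hF : ∀ t p, HasFDerivAt (F t) (D t p) p) (hM : ∀ t p, ‖D t p‖ ≤ M)
    (hv : ∀ t, ‖v t‖ ≤ Mv)
    (hX : ∀ s, ∀ t ∈ Icc 0 T, HasDerivAt (X s) (F t (X s t, u t + s • v t)) t)
    (hX0 : ∀ s, X s 0 = x₀) :
    ∃ C, ∀ s, ∀ t ∈ Icc 0 T, ‖X s t - X 0 t‖ ≤ C * |s| := by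
  have hM0 : 0 ≤ M := (norm_nonneg _).trans (hM 0 0)
  have hMv0 : 0 ≤ Mv := (norm_nonneg _).trans (hv 0)
  have hX₀ : ∀ t ∈ Icc 0 T, HasDerivAt (X 0) (F t (X 0 t, u t)) t := by simpa using hX 0
  refine ⟨M * Mv * gronwallBound 0 M 1 T, fun s t ht => ?_⟩
  have bound : ∀ r ∈ Icc 0 T, ‖F r (X s r, u r + s • v r) - F r (X 0 r, u r)‖
      ≤ M * ‖X s r - X 0 r‖ + M * Mv * |s| := by
    intro r _
    have hdiff : ‖((X s r, u r + s • v r) - (X 0 r, u r) : E × U)‖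
        ≤ ‖X s r - X 0 r‖ + Mv * |s| := by
      refine norm_prod_le_iff.mpr ⟨?_, ?_⟩
      · simpa using mul_nonneg hMv0 (abs_nonneg s)
      · simpa [norm_smul, mul_comm] using
          add_le_add (norm_nonneg (X s r - X 0 r)) (mul_le_mul_of_nonneg_left (hv r) (abs_nonneg s))
    calc ‖F r (X s r, u r + s • v r) - F r (X 0 r, u r)‖
        ≤ M * ‖((X s r, u r + s • v r) - (X 0 r, u r) : E × U)‖ :=
          convex_univ.norm_image_sub_le_of_norm_hasFDerivWithin_le
            (fun p _ => (hF r p).hasFDerivWithinAt) (fun p _ => hM r p) trivial trivial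
      _ ≤ M * (‖X s r - X 0 r‖ + Mv * |s|) := mul_le_mul_of_nonneg_left hdiff hM0
      _ = M * ‖X s r - X 0 r‖ + M * Mv * |s| := by ring
  calc ‖X s t - X 0 t‖ ≤ M * Mv * |s| * gronwallBound 0 M 1 T :=
        norm_le_mul_gronwallBound_of_hasDerivAt (φ := fun r => X s r - X 0 r) hM0 (by positivity)
          (fun r hr => (hX s r hr).sub (hX₀ r hr)) (by simp [hX0]) bound t ht
    _ = M * Mv * gronwallBound 0 M 1 T * |s| := by ring

lemma exists_norm_sub_sub_smul_le_sq_of_perturbed_control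
    (hF : ∀ t p, HasFDerivAt (F t) (D t p) p) (hM : ∀ t p, ‖D t p‖ ≤ M)
    (hDlip : ∀ t p q, ‖D t p - D t q‖ ≤ L * ‖p - q‖) (hL : 0 ≤ L) (hv : ∀ t, ‖v t‖ ≤ Mv)
    (hX : ∀ s, ∀ t ∈ Icc 0 T, HasDerivAt (X s) (F t (X s t, u t + s • v t)) t)
    (hX0 : ∀ s, X s 0 = x₀)
    (hy : ∀ t ∈ Icc 0 T, HasDerivAt y (D t (X 0 t, u t) (y t, v t)) t) (hy0 : y 0 = 0) :
    ∃ C, ∀ s, ∀ t ∈ Icc 0 T, ‖X s t - X 0 t - s • y t‖ ≤ C * s ^ 2 := by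
  obtain ⟨C₁, hC₁⟩ := exists_norm_sub_le_mul_abs_of_perturbed_control hF hM hv hX hX0
  have hM0 : 0 ≤ M := (norm_nonneg _).trans (hM 0 0)
  have hX₀ : ∀ t ∈ Icc 0 T, HasDerivAt (X 0) (F t (X 0 t, u t)) t := by simpa using hX 0
  set C₂ := max C₁ Mv
  refine ⟨L * C₂ ^ 2 * gronwallBound 0 M 1 T, fun s t ht => ?_⟩
  set r : ℝ → E := fun t => X s t - X 0 t - s • y t
  set p : ℝ → E × U := fun t => (X 0 t, u t)
  set q : ℝ → E × U := fun t => (X s t, u t + s • v t)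
  have hqp_le : ∀ τ ∈ Icc 0 T, ‖q τ - p τ‖ ≤ C₂ * |s| := by
    intro τ hτ
    refine norm_prod_le_iff.mpr ⟨?_, ?_⟩
    · simpa [p, q] using (hC₁ s τ hτ).trans
        (mul_le_mul_of_nonneg_right (le_max_left C₁ Mv) (abs_nonneg s))
    · simpa [p, q, norm_smul, mul_comm] using
        mul_le_mul_of_nonneg_left ((hv τ).trans (le_max_right C₁ Mv)) (abs_nonneg s)
  have hr_deriv : ∀ τ, F τ (q τ) - F τ (p τ) - s • D τ (p τ) (y τ, v τ)
      = (F τ (q τ) - F τ (p τ) - D τ (p τ) (q τ - p τ)) + D τ (p τ) (r τ, 0) := by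
    intro τ
    have hqp : q τ - p τ = s • (y τ, v τ) + (r τ, 0) := by
      ext <;> simp [p, q, r]
    rw [hqp, map_add, map_smul]
    abel
  have bound : ∀ τ ∈ Icc 0 T, ‖F τ (q τ) - F τ (p τ) - s • D τ (p τ) (y τ, v τ)‖
      ≤ M * ‖r τ‖ + L * C₂ ^ 2 * s ^ 2 := by
    intro τ hτ
    have htaylor : ‖F τ (q τ) - F τ (p τ) - D τ (p τ) (q τ - p τ)‖ ≤ L * C₂ ^ 2 * s ^ 2 :=
      calc _ ≤ L * ‖q τ - p τ‖ ^ 2 :=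
            norm_image_sub_sub_le_of_lipschitz_fderiv (hF τ) hL (hDlip τ) (p τ) (q τ)
        _ ≤ L * (C₂ * |s|) ^ 2 := by gcongr; exact hqp_le τ hτ
        _ = L * C₂ ^ 2 * s ^ 2 := by rw [mul_pow, sq_abs]; ring
    have hlinear : ‖D τ (p τ) (r τ, 0)‖ ≤ M * ‖r τ‖ := by
      simpa using (D τ (p τ)).le_of_opNorm_le (hM τ (p τ)) (r τ, 0)
    rw [hr_deriv]
    linarith [norm_add_le (F τ (q τ) - F τ (p τ) - D τ (p τ) (q τ - p τ)) (D τ (p τ) (r τ, 0))]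
  calc ‖r t‖ ≤ L * C₂ ^ 2 * s ^ 2 * gronwallBound 0 M 1 T :=
        norm_le_mul_gronwallBound_of_hasDerivAt hM0 (by positivity)
          (fun t ht => ((hX s t ht).sub (hX₀ t ht)).sub ((hy t ht).const_smul s))
          (by simp [hX0, hy0]) bound t ht
    _ = L * C₂ ^ 2 * gronwallBound 0 M 1 T * s ^ 2 := by ring

end ControlToState

theorem control_to_state_directional_derivative_general (d m : ℕ) (T : ℝ)
    (f : ℝ → EuclideanSpace ℝ (Fin d) → EuclideanSpace ℝ (Fin m) → EuclideanSpace ℝ (Fin d))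
    (D : ℝ → (EuclideanSpace ℝ (Fin d) × EuclideanSpace ℝ (Fin m)) →
      (EuclideanSpace ℝ (Fin d) × EuclideanSpace ℝ (Fin m)) →L[ℝ] EuclideanSpace ℝ (Fin d))
    -- f is C¹ in (x,u) with derivative D
    (hf : ∀ t p, HasFDerivAt (fun q : EuclideanSpace ℝ (Fin d) × EuclideanSpace ℝ (Fin m) =>
      f t q.1 q.2) (D t p) p)
    -- bounded first derivatives
    (hDb : ∃ M, ∀ t p, ‖D t p‖ ≤ M)
    -- bounded second derivatives (Lipschitz derivative)
    (hDlip : ∃ L ≥ (0:ℝ), ∀ t p q, ‖D t p - D t q‖ ≤ L * ‖p - q‖)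
    (u v : ℝ → EuclideanSpace ℝ (Fin m))
    (hvb : ∃ M, ∀ t, ‖v t‖ ≤ M)
    (x₀ : EuclideanSpace ℝ (Fin d))
    (X : ℝ → ℝ → EuclideanSpace ℝ (Fin d))
    (hX : ∀ s, ∀ t ∈ Set.Icc (0:ℝ) T, HasDerivAt (X s) (f t (X s t) (u t + s • v t)) t)
    (hX0 : ∀ s, X s 0 = x₀)
    (y : ℝ → EuclideanSpace ℝ (Fin d))
    (hy : ∀ t ∈ Set.Icc (0:ℝ) T, HasDerivAt y (D t (X 0 t, u t) (y t, v t)) t)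
    (hy0 : y 0 = 0) :
    ∀ t ∈ Set.Icc (0:ℝ) T,
      Tendsto (fun s : ℝ => s⁻¹ • (X s t - X 0 t)) (𝓝[≠] (0:ℝ)) (𝓝 (y t)) := by
  obtain ⟨M, hM⟩ := hDb
  obtain ⟨L, hL, hDlip⟩ := hDlip
  obtain ⟨Mv, hv⟩ := hvb
  obtain ⟨C, hC⟩ := exists_norm_sub_sub_smul_le_sq_of_perturbed_control
    (F := fun t q => f t q.1 q.2) hf hM hDlip hL hv hX hX0 hy hy0
  intro t ht
  have hderiv : HasDerivAt (fun s => X s t) (y t) 0 :=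
    hasDerivAt_of_norm_sub_sub_smul_le_sq fun s => hC s t ht
  exact (hasDerivAt_iff_tendsto_slope.mp hderiv).congr fun s => by simp [slope_def_module]

/-- Directional differentiability of the control-to-state map (Lemma A.1):
if `x^s` solves `(x^s)' = f(t, x^s, u + s v)`, `x^s(0) = x₀`, and `y` solves
the linearized equation, then `(x^s(t) - x^0(t))/s → y(t)` as `s → 0`. -/
theorem control_to_state_directional_derivative (d m : ℕ) (T : ℝ) (hT : 0 < T)
    (f : ℝ → EuclideanSpace ℝ (Fin d) → EuclideanSpace ℝ (Fin m) → EuclideanSpace ℝ (Fin d))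
    (D : ℝ → (EuclideanSpace ℝ (Fin d) × EuclideanSpace ℝ (Fin m)) →
      (EuclideanSpace ℝ (Fin d) × EuclideanSpace ℝ (Fin m)) →L[ℝ] EuclideanSpace ℝ (Fin d))
    -- f is C¹ in (x,u) with derivative D
    (hf : ∀ t p, HasFDerivAt (fun q : EuclideanSpace ℝ (Fin d) × EuclideanSpace ℝ (Fin m) =>
      f t q.1 q.2) (D t p) p)
    -- bounded first derivatives
    (hDb : ∃ M, ∀ t p, ‖D t p‖ ≤ M)
    -- bounded second derivatives (Lipschitz derivative)
    (hDlip : ∃ L ≥ (0:ℝ), ∀ t p q, ‖D t p - D t q‖ ≤ L * ‖p - q‖)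
    (u v : ℝ → EuclideanSpace ℝ (Fin m))
    (hu : Measurable u) (hv : Measurable v)
    (hub : ∃ M, ∀ t, ‖u t‖ ≤ M) (hvb : ∃ M, ∀ t, ‖v t‖ ≤ M)
    (x₀ : EuclideanSpace ℝ (Fin d))
    (X : ℝ → ℝ → EuclideanSpace ℝ (Fin d))
    (hX : ∀ s, ∀ t ∈ Set.Icc (0:ℝ) T, HasDerivAt (X s) (f t (X s t) (u t + s • v t)) t)
    (hX0 : ∀ s, X s 0 = x₀)
    (y : ℝ → EuclideanSpace ℝ (Fin d))
    (hy : ∀ t ∈ Set.Icc (0:ℝ) T, HasDerivAt y (D t (X 0 t, u t) (y t, v t)) t)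
    (hy0 : y 0 = 0) :
    ∀ t ∈ Set.Icc (0:ℝ) T,
      Tendsto (fun s : ℝ => s⁻¹ • (X s t - X 0 t)) (𝓝[≠] (0:ℝ)) (𝓝 (y t)) :=
  control_to_state_directional_derivative_general d m T f D hf hDb hDlip u v hvb x₀ X hX hX0 y hy
    hy0
end
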